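/- For rooted trees $r, s, t$, one has $\beta(t,s,r)\,\xi_t = \alpha(s,t,r)\,\xi_r\,\xi_s$, where $\xi_u$ denotes the number of root-fixing graph automorphisms of the rooted tree $u$. -/

import Mathlib

namespace IE

/-- A rooted tree: a root together with a list of subtrees. -/
inductive RTree : Type
  | node : List RTree → RTree

namespace RTree

/-- Number of vertices of a rooted tree. -/
def size : RTree → ℕ
  | node cs => 1 + (cs.attach.map (fun c => size c.1)).sum
decreasing_by
  have h1 := List.sizeOf_lt_of_mem c.2
  have h2 : sizeOf (RTree.node cs) = 1 + sizeOf cs := by simp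
  omega

mutual
  /-- Positions (vertices) of a rooted tree, as index paths from the root. -/
  def pos : RTree → List (List ℕ)
    | node cs => [] :: posAux cs 0
  def posAux : List RTree → ℕ → List (List ℕ)
    | [], _ => []
    | c :: cs, i => (pos c).map (i :: ·) ++ posAux cs (i + 1)
end

theorem root_mem_pos (t : RTree) : [] ∈ pos t := by
  cases t with
  | node cs => simp [pos]

/-- The subtree rooted at a given position. -/
def subtreeAt : List ℕ → RTree → RTree
  | [], t => t
  | i :: p, node cs =>
    match cs[i]? with
    | some c => subtreeAt p c
    | none => node cs

/-- The tree obtained by removing the subtree hanging at a given (non-root) position,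
i.e. the root-side part `R_e` of the edge cut. -/
def removeAt : List ℕ → RTree → RTree
  | [], t => t
  | [i], node cs => node (cs.eraseIdx i)
  | i :: j :: p, node cs => node (cs.modify i (removeAt (j :: p)))

/-- `graft v t s` attaches the root of `s` by a new edge to the vertex `v` of `t`
(the operation `t ∪_v s`). -/
def graft : List ℕ → RTree → RTree → RTree
  | [], node cs, s => node (cs ++ [s])
  | i :: p, node cs, s => node (cs.modify i (fun c => graft p c s))

/-- Adjacency of positions: one is the parent of the other. -/
def adj (p q : List ℕ) : Prop :=
  (p ≠ [] ∧ p.dropLast = q) ∨ (q ≠ [] ∧ q.dropLast = p)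

/-- Rooted isomorphism: a bijection of vertex sets fixing the root and preserving
adjacency. -/
def Iso (s t : RTree) : Prop :=
  ∃ f : {p // p ∈ pos s} ≃ {p // p ∈ pos t},
    (f ⟨[], root_mem_pos s⟩).1 = [] ∧
      ∀ p q : {p // p ∈ pos s}, adj p.1 q.1 ↔ adj (f p).1 (f q).1

/-- The number of root-fixing graph automorphisms of a rooted tree. -/
noncomputable def xi (t : RTree) : ℕ :=
  Nat.card {f : {p // p ∈ pos t} ≃ {p // p ∈ pos t} //
    (f ⟨[], root_mem_pos t⟩).1 = [] ∧
      ∀ p q : {p // p ∈ pos t}, adj p.1 q.1 ↔ adj (f p).1 (f q).1}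

open Classical in
/-- `alpha t₁ t₂ t₃` = number of edges `e` of `t₂` (identified with the non-root
vertex below `e`) such that cutting `e` yields root part `R_e(t₂) ≅ t₃` and pruned
part `P_e(t₂) ≅ t₁`. -/
noncomputable def alpha (t1 t2 t3 : RTree) : ℕ :=
  ((pos t2).filter fun v =>
    decide (v ≠ [] ∧ Iso (subtreeAt v t2) t1 ∧ Iso (removeAt v t2) t3)).length

open Classical in
/-- `beta t₁ t₂ t₃` = number of vertices `v` of `t₃` with `t₁ ≅ t₃ ∪_v t₂`. -/
noncomputable def beta (t1 t2 t3 : RTree) : ℕ :=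
  ((pos t3).filter fun v => decide (Iso t1 (graft v t3 t2))).length


/-! ### Part A: paths and basic lemmas -/

theorem ind {motive : RTree → Prop}
    (h : ∀ cs, (∀ c ∈ cs, motive c) → motive (node cs)) : ∀ t, motive t
  | node cs => h cs (fun c hc => ind h c)
decreasing_by
  have h1 := List.sizeOf_lt_of_mem hc
  have h2 : sizeOf (RTree.node cs) = 1 + sizeOf cs := by simp
  omega

/-- `IsPath p t`: `p` is a valid index path in `t`. -/
def IsPath : List ℕ → RTree → Prop
  | [], _ => True
  | i :: p, node cs => ∃ c, cs[i]? = some c ∧ IsPath p c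

@[simp] theorem isPath_nil (t : RTree) : IsPath [] t := by
  cases t; trivial

theorem isPath_cons {i : ℕ} {p : List ℕ} {cs : List RTree} :
    IsPath (i :: p) (node cs) ↔ ∃ c, cs[i]? = some c ∧ IsPath p c := Iff.rfl

theorem mem_posAux {cs : List RTree} {k : ℕ} {q : List ℕ} :
    q ∈ posAux cs k ↔ ∃ i c, cs[i]? = some c ∧ ∃ u, u ∈ pos c ∧ q = (k + i) :: u := by
  induction cs generalizing k with
  | nil => simp [posAux]
  | cons c cs ih =>
    simp only [posAux, List.mem_append, List.mem_map, ih]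
    constructor
    · rintro (⟨u, hu, rfl⟩ | ⟨i, c', hc', u, hu, rfl⟩)
      · exact ⟨0, c, by simp, u, hu, by simp⟩
      · exact ⟨i + 1, c', by simpa using hc', u, hu, by
          congr 1; omega⟩
    · rintro ⟨i, c', hc', u, hu, rfl⟩
      cases i with
      | zero =>
        left
        simp only [List.getElem?_cons_zero, Option.some.injEq] at hc'
        subst hc'
        exact ⟨u, hu, by simp⟩
      | succ i =>
        right
        refine ⟨i, c', by simpa using hc', u, hu, by congr 1; omega⟩

theorem mem_pos {q : List ℕ} {t : RTree} : q ∈ pos t ↔ IsPath q t := by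
  induction q generalizing t with
  | nil => simp [root_mem_pos]
  | cons i p ih =>
    cases t with
    | node cs =>
      simp only [pos, List.mem_cons, mem_posAux, isPath_cons]
      constructor
      · rintro (h | ⟨i', c, hc, u, hu, h⟩)
        · simp at h
        · simp only [Nat.zero_add, List.cons.injEq] at h
          obtain ⟨rfl, rfl⟩ := h
          exact ⟨c, hc, ih.1 hu⟩
      · rintro ⟨c, hc, hp⟩
        exact Or.inr ⟨i, c, hc, p, ih.2 hp, by simp⟩

theorem isPath_of_prefix {p q : List ℕ} {t : RTree} (hp : IsPath p t) (h : q <+: p) :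
    IsPath q t := by
  induction q generalizing p t with
  | nil => simp
  | cons j q' ihq =>
    cases p with
    | nil => simp at h
    | cons i p' =>
      rw [List.cons_prefix_cons] at h
      obtain ⟨rfl, h⟩ := h
      cases t with
      | node cs =>
        obtain ⟨c, hc, hp'⟩ := hp
        exact ⟨c, hc, ihq hp' h⟩

theorem isPath_dropLast {p : List ℕ} {t : RTree} (hp : IsPath p t) : IsPath p.dropLast t :=
  isPath_of_prefix hp (List.dropLast_prefix p)

theorem posAux_head {cs : List RTree} {k : ℕ} {q : List ℕ} (h : q ∈ posAux cs k) :
    ∃ i u, k ≤ i ∧ q = i :: u := by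
  rw [mem_posAux] at h
  obtain ⟨i, c, _, u, _, rfl⟩ := h
  exact ⟨k + i, u, by omega, rfl⟩

theorem posAux_nodup {cs : List RTree} (hcs : ∀ c ∈ cs, (pos c).Nodup) (k : ℕ) :
    (posAux cs k).Nodup := by
  induction cs generalizing k with
  | nil => simp [posAux]
  | cons c cs ih =>
    refine List.Nodup.append ?_ (ih (fun c hc => hcs c (List.mem_cons_of_mem _ hc)) (k + 1)) ?_
    · exact (hcs c (by simp)).map (fun a b h => by simpa using h)
    · intro q hq hq'
      obtain ⟨u, hu, rfl⟩ := List.mem_map.1 hq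
      obtain ⟨i, u', hi, h⟩ := posAux_head hq'
      simp only [List.cons.injEq] at h
      omega

theorem pos_nodup (t : RTree) : (pos t).Nodup := by
  induction t using ind with
  | h cs ih =>
    rw [pos]
    refine List.Nodup.cons ?_ (posAux_nodup ih 0)
    intro h
    obtain ⟨i, u, _, h⟩ := posAux_head h
    simp at h

/-! ### adjacency lemmas -/

theorem adj_comm {p q : List ℕ} : adj p q ↔ adj q p := by unfold adj; tauto

theorem not_adj_self {p : List ℕ} : ¬ adj p p := by
  rintro (⟨h, hd⟩ | ⟨h, hd⟩) <;>
  · have := congrArg List.length hd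
    rw [List.length_dropLast] at this
    cases p <;> simp_all

theorem adj_append {x u1 u2 : List ℕ} : adj (x ++ u1) (x ++ u2) ↔ adj u1 u2 := by
  have key : ∀ y1 y2 : List ℕ, (x ++ y1 ≠ [] ∧ (x ++ y1).dropLast = x ++ y2) ↔
      (y1 ≠ [] ∧ y1.dropLast = y2) := by
    intro y1 y2
    cases y1 with
    | nil =>
      simp only [List.append_nil, ne_eq, not_true_eq_false, false_and, iff_false, not_and]
      intro hx h
      have := congrArg List.length h
      rw [List.length_dropLast, List.length_append] at this
      cases x with
      | nil => exact hx rfl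
      | cons a x => simp at this; omega
    | cons a y1' =>
      rw [List.dropLast_append_of_ne_nil (l := a :: y1') (by simp)]
      simp [List.append_right_inj]
  unfold adj
  rw [key, key]

theorem adj_cross {e q u : List ℕ} (he : e ≠ []) (hq : ¬ e <+: q) :
    adj q (e ++ u) ↔ q = e.dropLast ∧ u = [] := by
  constructor
  · rintro (⟨hq', hd⟩ | ⟨_, hd⟩)
    · exact absurd ((List.prefix_append e u).trans (hd ▸ List.dropLast_prefix q)) hq
    · cases u with
      | nil => simp only [List.append_nil] at hd; exact ⟨hd.symm, rfl⟩
      | cons b u' =>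
        rw [List.dropLast_append_of_ne_nil (l := b :: u') (by simp)] at hd
        exact absurd (hd ▸ List.prefix_append e _) hq
  · rintro ⟨rfl, rfl⟩
    right
    simp [he]

theorem prefix_dropLast_of_lt {p q : List ℕ} (h : q <+: p) (hl : q.length < p.length) :
    q <+: p.dropLast := by
  rw [List.prefix_iff_eq_take] at h ⊢
  rw [List.dropLast_eq_take, List.take_take]
  rw [inf_of_le_left (by omega)]
  exact h

theorem eq_append_drop_of_prefix {w x : List ℕ} (h : w <+: x) :
    w ++ x.drop w.length = x := List.prefix_iff_eq_append.1 h

/-! ### Part B: relabeling for removeAt -/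

/-- Relabeling of positions of `t` (not below `e`) to positions of `removeAt e t`. -/
def rho : List ℕ → List ℕ → List ℕ
  | _, [] => []
  | [j], k :: u => if j < k then (k - 1) :: u else k :: u
  | i :: j :: p, k :: u => if k = i then k :: rho (j :: p) u else k :: u
  | [], q => q

@[simp] theorem rho_nil_right (e : List ℕ) : rho e [] = [] := by
  rcases e with _ | ⟨i, _ | ⟨j, p⟩⟩ <;> rfl

@[simp] theorem rho_nil_left (q : List ℕ) : rho [] q = q := by
  cases q <;> rfl

theorem rho_single (j k : ℕ) (u : List ℕ) :
    rho [j] (k :: u) = if j < k then (k - 1) :: u else k :: u := rfl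

theorem rho_cons (i j : ℕ) (p : List ℕ) (k : ℕ) (u : List ℕ) :
    rho (i :: j :: p) (k :: u) = if k = i then k :: rho (j :: p) u else k :: u := rfl

/-- Inverse relabeling. -/
def rhoInv : List ℕ → List ℕ → List ℕ
  | _, [] => []
  | [j], k :: u => if j ≤ k then (k + 1) :: u else k :: u
  | i :: j :: p, k :: u => if k = i then k :: rhoInv (j :: p) u else k :: u
  | [], q => q

@[simp] theorem rhoInv_nil_right (e : List ℕ) : rhoInv e [] = [] := by
  rcases e with _ | ⟨i, _ | ⟨j, p⟩⟩ <;> rfl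

theorem rhoInv_single (j k : ℕ) (u : List ℕ) :
    rhoInv [j] (k :: u) = if j ≤ k then (k + 1) :: u else k :: u := rfl

theorem rhoInv_cons (i j : ℕ) (p : List ℕ) (k : ℕ) (u : List ℕ) :
    rhoInv (i :: j :: p) (k :: u) = if k = i then k :: rhoInv (j :: p) u else k :: u := rfl

theorem rho_eq_nil {e q : List ℕ} (he : e ≠ []) : rho e q = [] ↔ q = [] := by
  rcases e with _ | ⟨i, _ | ⟨j, p⟩⟩
  · exact absurd rfl he
  · rcases q with _ | ⟨k, u⟩
    · simp
    · rw [rho_single]; split <;> simp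
  · rcases q with _ | ⟨k, u⟩
    · simp
    · rw [rho_cons]; split <;> simp

theorem rhoInv_rho {e q : List ℕ} (h : ¬ e <+: q) : rhoInv e (rho e q) = q := by
  induction e generalizing q with
  | nil => exact absurd (List.nil_prefix) h
  | cons i e' ih =>
    rcases q with _ | ⟨k, u⟩
    · simp
    · rcases e' with _ | ⟨j, p⟩
      · rw [List.cons_prefix_cons] at h
        simp only [List.nil_prefix, and_true] at h
        rw [rho_single]
        by_cases hik : i < k
        · rw [if_pos hik, rhoInv_single, if_pos (by omega)]
          congr 1
          omega
        · rw [if_neg hik, rhoInv_single, if_neg (by omega)]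
      · rw [rho_cons]
        by_cases hk : k = i
        · subst hk
          rw [List.cons_prefix_cons] at h
          simp only [true_and] at h
          rw [if_pos rfl, rhoInv_cons, if_pos rfl, ih h]
        · rw [if_neg hk, rhoInv_cons, if_neg hk]

theorem rho_rhoInv {e : List ℕ} (he : e ≠ []) (q : List ℕ) : rho e (rhoInv e q) = q := by
  induction e generalizing q with
  | nil => exact absurd rfl he
  | cons i e' ih =>
    rcases q with _ | ⟨k, u⟩
    · simp
    · rcases e' with _ | ⟨j, p⟩
      · rw [rhoInv_single]
        by_cases hik : i ≤ k
        · rw [if_pos hik, rho_single, if_pos (by omega)]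
          simp
        · rw [if_neg hik, rho_single, if_neg (by omega)]
      · rw [rhoInv_cons]
        by_cases hk : k = i
        · subst hk
          rw [if_pos rfl, rho_cons, if_pos rfl, ih (by simp)]
        · rw [if_neg hk, rho_cons, if_neg hk]

theorem not_prefix_rhoInv {e : List ℕ} (he : e ≠ []) (q : List ℕ) : ¬ e <+: rhoInv e q := by
  induction e generalizing q with
  | nil => exact absurd rfl he
  | cons i e' ih =>
    rcases q with _ | ⟨k, u⟩
    · simp only [rhoInv_nil_right]
      intro h
      exact by simpa using h.length_le
    · rcases e' with _ | ⟨j, p⟩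
      · rw [rhoInv_single]
        split <;> rw [List.cons_prefix_cons] <;> rintro ⟨h, -⟩ <;> omega
      · rw [rhoInv_cons]
        by_cases hk : k = i
        · subst hk
          rw [if_pos rfl, List.cons_prefix_cons]
          rintro ⟨-, h⟩
          exact ih (by simp) u h
        · rw [if_neg hk, List.cons_prefix_cons]
          rintro ⟨h, -⟩
          exact hk h.symm

theorem rho_parent (e : List ℕ) : rho e e.dropLast = e.dropLast := by
  induction e with
  | nil => simp
  | cons i e' ih =>
    rcases e' with _ | ⟨j, p⟩
    · simp
    · rw [List.dropLast_cons₂, rho_cons, if_pos rfl, ih]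

theorem rhoInv_parent (e : List ℕ) : rhoInv e e.dropLast = e.dropLast := by
  induction e with
  | nil => simp
  | cons i e' ih =>
    rcases e' with _ | ⟨j, p⟩
    · simp
    · rw [List.dropLast_cons₂, rhoInv_cons, if_pos rfl, ih]

theorem not_prefix_dropLast {e : List ℕ} (he : e ≠ []) : ¬ e <+: e.dropLast := by
  intro h
  have := h.length_le
  rw [List.length_dropLast] at this
  cases e <;> simp_all

theorem rho_dropLast {e q : List ℕ} (hq : q ≠ []) (h : ¬ e <+: q) :
    rho e q.dropLast = (rho e q).dropLast := by
  induction e generalizing q with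
  | nil => simp
  | cons i e' ih =>
    rcases q with _ | ⟨k, u⟩
    · exact absurd rfl hq
    · rcases e' with _ | ⟨j, p⟩
      · rw [List.cons_prefix_cons] at h
        simp only [List.nil_prefix, and_true] at h
        rcases u with _ | ⟨b, u'⟩
        · simp only [List.dropLast_singleton, rho_nil_right, rho_single]
          split <;> simp
        · rw [List.dropLast_cons₂, rho_single, rho_single]
          split <;> rw [List.dropLast_cons₂]
      · rw [rho_cons]
        by_cases hk : k = i
        · subst hk
          rw [List.cons_prefix_cons] at h
          simp only [true_and] at h
          rw [if_pos rfl]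
          rcases u with _ | ⟨b, u'⟩
          · simp
          · rw [List.dropLast_cons₂, rho_cons, if_pos rfl,
              ih (by simp) h]
            have hne : rho (j :: p) (b :: u') ≠ [] := by
              rw [ne_eq, rho_eq_nil (by simp)]; simp
            rcases hrr : rho (j :: p) (b :: u') with _ | ⟨c, w⟩
            · exact absurd hrr hne
            · rw [List.dropLast_cons₂]
        · rw [if_neg hk]
          rcases u with _ | ⟨b, u'⟩
          · simp
          · rw [List.dropLast_cons₂, rho_cons, if_neg hk]

theorem rho_adj {e q1 q2 : List ℕ} (he : e ≠ []) (h1 : ¬ e <+: q1) (h2 : ¬ e <+: q2) :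
    adj q1 q2 ↔ adj (rho e q1) (rho e q2) := by
  have inj : ∀ a b : List ℕ, ¬ e <+: a → ¬ e <+: b → rho e a = rho e b → a = b := by
    intro a b ha hb hab
    rw [← rhoInv_rho (e := e) ha, ← rhoInv_rho (e := e) hb, hab]
  have hnil : ∀ a : List ℕ, rho e a = [] ↔ a = [] := fun a => rho_eq_nil he
  constructor
  · rintro (⟨ha, hd⟩ | ⟨ha, hd⟩)
    · left
      refine ⟨by rwa [ne_eq, hnil], ?_⟩
      rw [← rho_dropLast ha h1, hd]
    · right
      refine ⟨by rwa [ne_eq, hnil], ?_⟩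
      rw [← rho_dropLast ha h2, hd]
  · rintro (⟨ha, hd⟩ | ⟨ha, hd⟩)
    · rw [ne_eq, hnil] at ha
      rw [← rho_dropLast ha h1] at hd
      left
      exact ⟨ha, inj _ _ (fun hh => h1 (hh.trans (List.dropLast_prefix _))) h2 hd⟩
    · rw [ne_eq, hnil] at ha
      rw [← rho_dropLast ha h2] at hd
      right
      exact ⟨ha, inj _ _ (fun hh => h2 (hh.trans (List.dropLast_prefix _))) h1 hd⟩

/-! ### Part C: membership lemmas for subtreeAt, removeAt, graft -/

theorem subtreeAt_cons {i : ℕ} {p : List ℕ} {cs : List RTree} {c : RTree}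
    (hc : cs[i]? = some c) : subtreeAt (i :: p) (node cs) = subtreeAt p c := by
  rw [subtreeAt, hc]

theorem isPath_append {e u : List ℕ} {t : RTree} (he : IsPath e t) :
    IsPath (e ++ u) t ↔ IsPath u (subtreeAt e t) := by
  induction e generalizing t with
  | nil => rw [subtreeAt]; simp
  | cons i p ih =>
    cases t with
    | node cs =>
      obtain ⟨c, hc, hpc⟩ := he
      rw [subtreeAt_cons hc, List.cons_append, isPath_cons]
      constructor
      · rintro ⟨c', hc', h⟩
        rw [hc, Option.some.injEq] at hc'
        subst hc'
        exact (ih hpc).1 h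
      · intro h
        exact ⟨c, hc, (ih hpc).2 h⟩

theorem removeAt_single {j : ℕ} {cs : List RTree} :
    removeAt [j] (node cs) = node (cs.eraseIdx j) := rfl

theorem removeAt_cons {i j : ℕ} {p : List ℕ} {cs : List RTree} :
    removeAt (i :: j :: p) (node cs) = node (cs.modify i (removeAt (j :: p))) := rfl

theorem removeAt_isPath {e : List ℕ} {t : RTree} (he : IsPath e t) (hne : e ≠ []) :
    ∀ {q : List ℕ}, IsPath q t → ¬ e <+: q → IsPath (rho e q) (removeAt e t) := by
  induction e generalizing t with
  | nil => exact absurd rfl hne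
  | cons i e' ih =>
    intro q hq hpre
    cases t with
    | node cs =>
      obtain ⟨c, hc, hec⟩ := he
      rcases q with _ | ⟨k, u⟩
      · simp
      · obtain ⟨c', hc', huc'⟩ := hq
        rcases e' with _ | ⟨j, p⟩
        · rw [List.cons_prefix_cons] at hpre
          simp only [List.nil_prefix, and_true] at hpre
          rw [removeAt_single, rho_single]
          by_cases hik : i < k
          · rw [if_pos hik]
            refine ⟨c', ?_, huc'⟩
            rw [List.getElem?_eraseIdx, if_neg (by omega)]
            rw [← hc']
            congr 1
            omega
          · rw [if_neg hik]
            refine ⟨c', ?_, huc'⟩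
            rw [List.getElem?_eraseIdx, if_pos (by omega)]
            exact hc'
        · rw [removeAt_cons, rho_cons]
          by_cases hk : k = i
          · subst hk
            rw [if_pos rfl]
            rw [List.cons_prefix_cons] at hpre
            simp only [true_and] at hpre
            rw [hc] at hc'
            have hcc : c = c' := Option.some.inj hc'
            have huc : IsPath u c := hcc ▸ huc'
            refine ⟨removeAt (j :: p) c, ?_, ih hec (by simp) huc hpre⟩
            rw [List.getElem?_modify, hc]
            simp
          · rw [if_neg hk]
            refine ⟨c', ?_, huc'⟩
            rw [List.getElem?_modify, hc']
            simp [Ne.symm hk]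

theorem rhoInv_isPath {e : List ℕ} {t : RTree} (he : IsPath e t) (hne : e ≠ []) :
    ∀ {q : List ℕ}, IsPath q (removeAt e t) → IsPath (rhoInv e q) t := by
  induction e generalizing t with
  | nil => exact absurd rfl hne
  | cons i e' ih =>
    intro q hq
    cases t with
    | node cs =>
      obtain ⟨c, hc, hec⟩ := he
      rcases q with _ | ⟨k, u⟩
      · simp
      · rcases e' with _ | ⟨j, p⟩
        · rw [removeAt_single] at hq
          obtain ⟨c', hc', huc'⟩ := hq
          rw [rhoInv_single]
          by_cases hik : i ≤ k
          · rw [if_pos hik]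
            refine ⟨c', ?_, huc'⟩
            rw [List.getElem?_eraseIdx, if_neg (by omega)] at hc'
            exact hc'
          · rw [if_neg hik]
            refine ⟨c', ?_, huc'⟩
            rw [List.getElem?_eraseIdx, if_pos (by omega)] at hc'
            exact hc'
        · rw [removeAt_cons] at hq
          obtain ⟨c', hc', huc'⟩ := hq
          rw [List.getElem?_modify] at hc'
          rw [rhoInv_cons]
          by_cases hk : k = i
          · subst hk
            rw [if_pos rfl]
            rw [hc] at hc'
            have hcc : removeAt (j :: p) c = c' := by simpa using hc'
            refine ⟨c, hc, ?_⟩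
            apply ih hec (by simp)
            rw [hcc]
            exact huc'
          · rw [if_neg hk]
            refine ⟨c', ?_, huc'⟩
            simp only [if_neg (fun h : i = k => hk h.symm)] at hc'
            simpa using hc'

/-! ### graft -/

/-- Number of children of the root. -/
def arity : RTree → ℕ
  | node cs => cs.length

theorem graft_nil {cs : List RTree} {s : RTree} :
    graft [] (node cs) s = node (cs ++ [s]) := rfl

theorem graft_cons {i : ℕ} {p : List ℕ} {cs : List RTree} {s : RTree} :
    graft (i :: p) (node cs) s = node (cs.modify i (fun c => graft p c s)) := rfl

theorem not_isPath_overflow {v : List ℕ} {r : RTree} (hv : IsPath v r) (u : List ℕ) :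
    ¬ IsPath (v ++ arity (subtreeAt v r) :: u) r := by
  induction v generalizing r with
  | nil =>
    cases r with
    | node cs =>
      rintro ⟨c, hc, -⟩
      rw [subtreeAt] at hc
      have : cs[cs.length]? = none := List.getElem?_eq_none (le_refl _)
      rw [show arity (node cs) = cs.length from rfl, this] at hc
      simp at hc
  | cons i p ih =>
    cases r with
    | node cs =>
      obtain ⟨c, hc, hpc⟩ := hv
      rintro ⟨c', hc', h⟩
      rw [hc, Option.some.injEq] at hc'
      subst hc'
      rw [subtreeAt_cons hc] at h
      exact ih hpc h

theorem isPath_graft {v : List ℕ} {r : RTree} (hv : IsPath v r) (s : RTree) {q : List ℕ} :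
    IsPath q (graft v r s) ↔
      IsPath q r ∨ ∃ u, IsPath u s ∧ q = v ++ arity (subtreeAt v r) :: u := by
  induction v generalizing r q with
  | nil =>
    cases r with
    | node cs =>
      rw [graft_nil, subtreeAt]
      rcases q with _ | ⟨k, u⟩
      · simp
      · rw [isPath_cons, isPath_cons]
        constructor
        · rintro ⟨c, hc, h⟩
          rw [List.getElem?_append] at hc
          split at hc
          · exact Or.inl ⟨c, hc, h⟩
          · rename_i hlen
            rcases Nat.lt_or_ge (k - cs.length) 1 with h1 | h1
            · have hk : k = cs.length := by omega
              subst hk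
              simp only [Nat.sub_self, List.getElem?_cons_zero, Option.some.injEq] at hc
              subst hc
              exact Or.inr ⟨u, h, by simp [arity]⟩
            · rw [List.getElem?_eq_none (by simp; omega)] at hc
              simp at hc
        · rintro (⟨c, hc, h⟩ | ⟨u', h, hequ⟩)
          · have hlt : k < cs.length := by
              by_contra hh
              rw [List.getElem?_eq_none (by omega)] at hc
              simp at hc
            exact ⟨c, by rw [List.getElem?_append, if_pos hlt]; exact hc, h⟩
          · simp only [arity, List.nil_append, List.cons.injEq] at hequ
            obtain ⟨rfl, rfl⟩ := hequ
            exact ⟨s, by simp, h⟩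
  | cons i p ih =>
    cases r with
    | node cs =>
      obtain ⟨c, hc, hpc⟩ := hv
      rw [graft_cons, subtreeAt_cons hc]
      rcases q with _ | ⟨k, u⟩
      · simp
      · rw [isPath_cons, isPath_cons]
        constructor
        · rintro ⟨c', hc', h⟩
          rw [List.getElem?_modify] at hc'
          by_cases hk : i = k
          · subst hk
            rw [hc] at hc'
            simp only [Option.map_eq_map, Option.map_some, Option.some.injEq, if_pos rfl] at hc'
            subst hc'
            rcases (ih hpc).1 h with h' | ⟨u', hs, hequ⟩
            · exact Or.inl ⟨c, hc, h'⟩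
            · exact Or.inr ⟨u', hs, by rw [hequ]; simp⟩
          · simp only [if_neg hk] at hc'
            refine Or.inl ⟨c', ?_, h⟩
            · simpa using hc'
        · rintro (⟨c', hc', h⟩ | ⟨u', hs, hequ⟩)
          · by_cases hk : i = k
            · subst hk
              rw [hc, Option.some.injEq] at hc'
              subst hc'
              exact ⟨graft p c s, by rw [List.getElem?_modify, hc]; simp,
                (ih hpc).2 (Or.inl h)⟩
            · refine ⟨c', ?_, h⟩
              rw [List.getElem?_modify]
              simp only [if_neg hk]
              simpa using hc'
          · simp only [List.cons_append, List.cons.injEq] at hequ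
            obtain ⟨rfl, rfl⟩ := hequ
            exact ⟨graft p c s, by rw [List.getElem?_modify, hc]; simp,
              (ih hpc).2 (Or.inr ⟨u', hs, rfl⟩)⟩

/-! ### Part D: isomorphisms as a type -/

abbrev Vx (t : RTree) := {p // p ∈ pos t}

def IsoM (a b : RTree) : Type :=
  {f : Vx a ≃ Vx b // (f ⟨[], root_mem_pos a⟩).1 = [] ∧
    ∀ p q : Vx a, adj p.1 q.1 ↔ adj (f p).1 (f q).1}

theorem xi_def (t : RTree) : xi t = Nat.card (IsoM t t) := rfl

theorem iso_iff_nonempty {a b : RTree} : Iso a b ↔ Nonempty (IsoM a b) :=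
  (nonempty_subtype).symm

noncomputable instance (a b : RTree) : Finite (IsoM a b) := by
  unfold IsoM
  infer_instance

theorem IsoM.root_eq {a b : RTree} (f : IsoM a b) :
    f.1 ⟨[], root_mem_pos a⟩ = ⟨[], root_mem_pos b⟩ := Subtype.ext f.2.1

def IsoM.refl (a : RTree) : IsoM a a :=
  ⟨Equiv.refl _, rfl, fun _ _ => Iff.rfl⟩

def IsoM.symm {a b : RTree} (f : IsoM a b) : IsoM b a :=
  ⟨f.1.symm, by
    have := f.root_eq
    rw [← this, Equiv.symm_apply_apply], by
    intro p q
    have := f.2.2 (f.1.symm p) (f.1.symm q)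
    rwa [Equiv.apply_symm_apply, Equiv.apply_symm_apply, iff_comm] at this⟩

def IsoM.trans {a b c : RTree} (f : IsoM a b) (g : IsoM b c) : IsoM a c :=
  ⟨f.1.trans g.1, by
    have h1 := f.root_eq
    have h2 := g.root_eq
    simp only [Equiv.trans_apply, h1, h2], by
    intro p q
    rw [f.2.2 p q, g.2.2 (f.1 p) (f.1 q)]
    exact Iff.rfl⟩

theorem IsoM.length_eq {a b : RTree} (f : IsoM a b) (p : Vx a) :
    (f.1 p).1.length = p.1.length := by
  suffices h : ∀ (n : ℕ) (a b : RTree) (f : IsoM a b) (p : Vx a), p.1.length = n →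
      (f.1 p).1.length = n by
    exact h _ _ _ f p rfl
  intro n
  induction n using Nat.strong_induction_on with
  | _ n ih =>
    intro a b f p hp
    match n, hp with
    | 0, hp =>
      have : p = ⟨[], root_mem_pos a⟩ := Subtype.ext (List.length_eq_zero_iff.1 hp)
      rw [this, f.root_eq]
      rfl
    | (m + 1), hp =>
      have hpne : p.1 ≠ [] := by
        intro h; rw [h] at hp; simp at hp
      set q : Vx a := ⟨p.1.dropLast, mem_pos.2 (isPath_dropLast (mem_pos.1 p.2))⟩ with hq
      have hql : q.1.length = m := by
        simp only [hq, List.length_dropLast, hp]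
        omega
      have hadj : adj p.1 q.1 := Or.inl ⟨hpne, rfl⟩
      have hadj' := (f.2.2 p q).1 hadj
      have hfq : (f.1 q).1.length = m := ih m (by omega) a b f q hql
      rcases hadj' with ⟨h1, h2⟩ | ⟨h1, h2⟩
      · have := congrArg List.length h2
        rw [List.length_dropLast, hfq] at this
        have hfpne : (f.1 p).1.length ≠ 0 := by
          intro hh
          exact h1 (List.length_eq_zero_iff.1 hh)
        omega
      · -- f q is the longer one; use the symm isomorphism for contradiction
        have hm1 : (f.1 q).1.dropLast.length = m - 1 := by
          rw [List.length_dropLast, hfq]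
        have hmge : 1 ≤ m := by
          have : (f.1 q).1.length ≠ 0 := fun hh => h1 (List.length_eq_zero_iff.1 hh)
          omega
        have hlen : (f.1 p).1.length = m - 1 := by rw [h2] at hm1; exact hm1
        have := ih (m - 1) (by omega) b a (IsoM.symm f) (f.1 p) hlen
        have heq : (IsoM.symm f).1 (f.1 p) = p := f.1.symm_apply_apply p
        rw [heq] at this
        omega

theorem IsoM.parent_eq {a b : RTree} (f : IsoM a b) (p : Vx a) (hp : p.1 ≠ []) :
    (f.1 ⟨p.1.dropLast, mem_pos.2 (isPath_dropLast (mem_pos.1 p.2))⟩).1 =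
      (f.1 p).1.dropLast := by
  set q : Vx a := ⟨p.1.dropLast, mem_pos.2 (isPath_dropLast (mem_pos.1 p.2))⟩ with hqdef
  have hadj : adj p.1 q.1 := Or.inl ⟨hp, rfl⟩
  have hadj' := (f.2.2 p q).1 hadj
  have hlp : (f.1 p).1.length = p.1.length := f.length_eq p
  have hlq : (f.1 q).1.length = p.1.length - 1 := by
    rw [f.length_eq q]
    simp [hqdef]
  rcases hadj' with ⟨h1, h2⟩ | ⟨h1, h2⟩
  · exact h2.symm
  · exfalso
    have := congrArg List.length h2
    rw [List.length_dropLast, hlq, hlp] at this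
    have hpl : p.1.length ≠ 0 := fun hh => hp (List.length_eq_zero_iff.1 hh)
    omega

theorem IsoM.prefix_mono {a b : RTree} (f : IsoM a b) (p q : Vx a) (h : q.1 <+: p.1) :
    (f.1 q).1 <+: (f.1 p).1 := by
  suffices hh : ∀ (n : ℕ) (p q : Vx a), p.1.length = n → q.1 <+: p.1 →
      (f.1 q).1 <+: (f.1 p).1 by
    exact hh _ p q rfl h
  intro n
  induction n using Nat.strong_induction_on with
  | _ n ih =>
    intro p q hl hpre
    by_cases hql : q.1.length = p.1.length
    · have : q = p := Subtype.ext (hpre.eq_of_length hql)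
      rw [this]
    · have hlt : q.1.length < p.1.length := lt_of_le_of_ne hpre.length_le hql
      have hpne : p.1 ≠ [] := by
        intro hh
        rw [hh] at hlt
        simp at hlt
      set p' : Vx a := ⟨p.1.dropLast, mem_pos.2 (isPath_dropLast (mem_pos.1 p.2))⟩ with hp'
      have hpre' : q.1 <+: p'.1 := prefix_dropLast_of_lt hpre hlt
      have hlen' : p'.1.length = p.1.length - 1 := by simp [hp']
      have ihres := ih (p.1.length - 1) (by omega) p' q (by omega) hpre'
      have hpar := f.parent_eq p hpne
      rw [hpar] at ihres
      exact ihres.trans (List.dropLast_prefix _)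

theorem IsoM.prefix_iff {a b : RTree} (f : IsoM a b) (p q : Vx a) :
    q.1 <+: p.1 ↔ (f.1 q).1 <+: (f.1 p).1 := by
  constructor
  · exact f.prefix_mono p q
  · intro h
    have := (IsoM.symm f).prefix_mono (f.1 p) (f.1 q) h
    simpa [IsoM.symm] using this

/-! ### cardinality of IsoM -/

theorem card_isoM_left {a b : RTree} (g : IsoM a b) : Nat.card (IsoM a b) = xi a := by
  rw [xi_def]
  apply Nat.card_congr
  exact {
    toFun := fun h => IsoM.trans h (IsoM.symm g)
    invFun := fun f => IsoM.trans f g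
    left_inv := fun h => by
      apply Subtype.ext; apply Equiv.ext; intro x
      simp [IsoM.trans, IsoM.symm]
    right_inv := fun f => by
      apply Subtype.ext; apply Equiv.ext; intro x
      simp [IsoM.trans, IsoM.symm] }

theorem card_isoM_right {a b : RTree} (g : IsoM a b) : Nat.card (IsoM a b) = xi b := by
  rw [xi_def]
  apply Nat.card_congr
  exact {
    toFun := fun h => IsoM.trans (IsoM.symm g) h
    invFun := fun k => IsoM.trans g k
    left_inv := fun h => by
      apply Subtype.ext; apply Equiv.ext; intro x
      simp [IsoM.trans, IsoM.symm]
    right_inv := fun k => by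
      apply Subtype.ext; apply Equiv.ext; intro x
      simp [IsoM.trans, IsoM.symm] }

theorem card_isoM_of_empty {a b : RTree} (h : ¬ Nonempty (IsoM a b)) :
    Nat.card (IsoM a b) = 0 := by
  rw [Nat.card_eq_zero]
  exact Or.inl (not_nonempty_iff.1 h)

/-! ### Part E: graft/cut helpers and the forward construction -/

section Main

variable {r s t : RTree}

def wlist (v : Vx r) : List ℕ := v.1 ++ [arity (subtreeAt v.1 r)]

theorem wlist_ne (v : Vx r) : wlist v ≠ [] := by simp [wlist]

theorem wlist_dropLast (v : Vx r) : (wlist v).dropLast = v.1 := List.dropLast_concat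

theorem wlist_append (v : Vx r) (u : List ℕ) :
    wlist v ++ u = v.1 ++ arity (subtreeAt v.1 r) :: u := by simp [wlist]

theorem wlist_mem (s : RTree) (v : Vx r) : wlist v ∈ pos (graft v.1 r s) := by
  rw [mem_pos, isPath_graft (mem_pos.1 v.2)]
  exact Or.inr ⟨[], by simp, rfl⟩

theorem not_mem_wlist_append (v : Vx r) (u : List ℕ) : (wlist v ++ u) ∉ pos r := by
  rw [mem_pos, wlist_append]
  exact not_isPath_overflow (mem_pos.1 v.2) u

theorem graft_mem_cases {v : Vx r} {s : RTree} {x : List ℕ} (hx : x ∈ pos (graft v.1 r s))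
    (hxr : x ∉ pos r) : wlist v <+: x ∧ x.drop (wlist v).length ∈ pos s := by
  rw [mem_pos, isPath_graft (mem_pos.1 v.2)] at hx
  rcases hx with h | ⟨u, hu, rfl⟩
  · exact absurd (mem_pos.2 h) hxr
  · rw [← wlist_append]
    exact ⟨List.prefix_append _ _, by rw [List.drop_left]; exact mem_pos.2 hu⟩

theorem graft_mem_left {s : RTree} (v : Vx r) {c : List ℕ} (hc : c ∈ pos r) :
    c ∈ pos (graft v.1 r s) :=
  mem_pos.2 ((isPath_graft (mem_pos.1 v.2) s).2 (Or.inl (mem_pos.1 hc)))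

theorem graft_mem_right {s : RTree} (v : Vx r) {d : List ℕ} (hd : d ∈ pos s) :
    wlist v ++ d ∈ pos (graft v.1 r s) :=
  mem_pos.2 ((isPath_graft (mem_pos.1 v.2) s).2 (Or.inr ⟨d, mem_pos.1 hd, wlist_append v d⟩))

theorem remove_mem {e : Vx t} (hne : e.1 ≠ []) {q : List ℕ} (hq : q ∈ pos t)
    (hpre : ¬ e.1 <+: q) : rho e.1 q ∈ pos (removeAt e.1 t) :=
  mem_pos.2 (removeAt_isPath (mem_pos.1 e.2) hne (mem_pos.1 hq) hpre)

theorem remove_mem_inv {e : Vx t} (hne : e.1 ≠ []) {q : List ℕ}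
    (hq : q ∈ pos (removeAt e.1 t)) : rhoInv e.1 q ∈ pos t :=
  mem_pos.2 (rhoInv_isPath (mem_pos.1 e.2) hne (mem_pos.1 hq))

theorem sub_mem {e : Vx t} {b : List ℕ} (hb : b ∈ pos (subtreeAt e.1 t)) :
    e.1 ++ b ∈ pos t :=
  mem_pos.2 ((isPath_append (mem_pos.1 e.2)).2 (mem_pos.1 hb))

theorem sub_mem_drop {e : Vx t} {q : List ℕ} (hq : q ∈ pos t) (hpre : e.1 <+: q) :
    q.drop e.1.length ∈ pos (subtreeAt e.1 t) := by
  have h1 := mem_pos.1 hq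
  rw [← eq_append_drop_of_prefix hpre] at h1
  exact mem_pos.2 ((isPath_append (mem_pos.1 e.2)).1 h1)

def piOf (e : Vx t) (hne : e.1 ≠ []) : Vx (removeAt e.1 t) :=
  ⟨e.1.dropLast, by
    have := remove_mem hne (mem_pos.2 (isPath_dropLast (mem_pos.1 e.2)))
      (not_prefix_dropLast hne)
    rwa [rho_parent] at this⟩

/-! #### Forward construction -/

section Forward

variable (v : Vx r) (f : IsoM t (graft v.1 r s))

noncomputable def eOf : Vx t := f.1.symm ⟨wlist v, wlist_mem s v⟩

theorem f_eOf : f.1 (eOf v f) = ⟨wlist v, wlist_mem s v⟩ := f.1.apply_symm_apply _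

theorem eOf_ne : (eOf v f).1 ≠ [] := by
  intro hh
  have h1 : eOf v f = ⟨[], root_mem_pos t⟩ := Subtype.ext hh
  have h2 := f_eOf v f
  rw [h1, f.root_eq] at h2
  exact wlist_ne v (congrArg Subtype.val h2).symm

theorem prefix_e_iff (q : Vx t) : (eOf v f).1 <+: q.1 ↔ wlist v <+: (f.1 q).1 := by
  have := f.prefix_iff q (eOf v f)
  rwa [f_eOf] at this

theorem image_mem_r (q : Vx t) (hq : ¬ (eOf v f).1 <+: q.1) : (f.1 q).1 ∈ pos r := by
  by_contra hh
  exact hq ((prefix_e_iff v f q).2 (graft_mem_cases (f.1 q).2 hh).1)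

theorem image_cases_s (q : Vx t) (hq : (eOf v f).1 <+: q.1) :
    wlist v <+: (f.1 q).1 ∧ (f.1 q).1.drop (wlist v).length ∈ pos s := by
  have hpre := (prefix_e_iff v f q).1 hq
  have hnr : (f.1 q).1 ∉ pos r := by
    intro hmem
    rw [← eq_append_drop_of_prefix hpre] at hmem
    exact not_mem_wlist_append v _ hmem
  exact ⟨hpre, (graft_mem_cases (f.1 q).2 hnr).2⟩

theorem symm_left_not_prefix {c : List ℕ} (hc : c ∈ pos r) :
    ¬ (eOf v f).1 <+: (f.1.symm ⟨c, graft_mem_left v hc⟩).1 := by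
  rw [prefix_e_iff v f (f.1.symm ⟨c, graft_mem_left v hc⟩), f.1.apply_symm_apply]
  intro hpre
  have hpre' : wlist v <+: c := hpre
  rw [← eq_append_drop_of_prefix hpre'] at hc
  exact not_mem_wlist_append v _ hc

noncomputable def fwdGe : Vx (removeAt (eOf v f).1 t) ≃ Vx r where
  toFun a := ⟨(f.1 ⟨rhoInv (eOf v f).1 a.1, remove_mem_inv (eOf_ne v f) a.2⟩).1,
    image_mem_r v f _ (not_prefix_rhoInv (eOf_ne v f) _)⟩
  invFun c := ⟨rho (eOf v f).1 (f.1.symm ⟨c.1, graft_mem_left v c.2⟩).1,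
    remove_mem (eOf_ne v f) (f.1.symm ⟨c.1, graft_mem_left v c.2⟩).2
      (symm_left_not_prefix v f c.2)⟩
  left_inv a := by
    apply Subtype.ext
    show rho _ (f.1.symm ⟨(f.1 ⟨rhoInv _ a.1, _⟩).1, _⟩).1 = a.1
    rw [Subtype.coe_eta, f.1.symm_apply_apply]
    exact rho_rhoInv (eOf_ne v f) a.1
  right_inv c := by
    apply Subtype.ext
    show (f.1 ⟨rhoInv _ (rho _ (f.1.symm ⟨c.1, _⟩).1), _⟩).1 = c.1
    have hy : (⟨rhoInv (eOf v f).1 (rho (eOf v f).1 (f.1.symm ⟨c.1, graft_mem_left v c.2⟩).1),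
        remove_mem_inv (eOf_ne v f) (remove_mem (eOf_ne v f)
          (f.1.symm ⟨c.1, graft_mem_left v c.2⟩).2 (symm_left_not_prefix v f c.2))⟩ : Vx t) =
        f.1.symm ⟨c.1, graft_mem_left v c.2⟩ :=
      Subtype.ext (rhoInv_rho (symm_left_not_prefix v f c.2))
    rw [hy, f.1.apply_symm_apply]

theorem fwdGe_val (a : Vx (removeAt (eOf v f).1 t)) :
    (fwdGe v f a).1 = (f.1 ⟨rhoInv (eOf v f).1 a.1, remove_mem_inv (eOf_ne v f) a.2⟩).1 := rfl

noncomputable def fwdG : IsoM (removeAt (eOf v f).1 t) r := by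
  refine ⟨fwdGe v f, ?_, ?_⟩
  · show (fwdGe v f ⟨[], root_mem_pos _⟩).1 = []
    rw [fwdGe_val]
    have hx : (⟨rhoInv (eOf v f).1 ([] : List ℕ), remove_mem_inv (eOf_ne v f)
        (root_mem_pos _)⟩ : Vx t) = ⟨[], root_mem_pos t⟩ :=
      Subtype.ext (rhoInv_nil_right _)
    rw [hx, f.root_eq]
  · intro a1 a2
    rw [fwdGe_val, fwdGe_val, ← f.2.2]
    show adj a1.1 a2.1 ↔ adj (rhoInv (eOf v f).1 a1.1) (rhoInv (eOf v f).1 a2.1)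
    have := rho_adj (eOf_ne v f) (not_prefix_rhoInv (eOf_ne v f) a1.1)
      (not_prefix_rhoInv (eOf_ne v f) a2.1)
    rw [rho_rhoInv (eOf_ne v f), rho_rhoInv (eOf_ne v f)] at this
    exact this.symm

noncomputable def fwdHe : Vx (subtreeAt (eOf v f).1 t) ≃ Vx s where
  toFun b := ⟨(f.1 ⟨(eOf v f).1 ++ b.1, sub_mem b.2⟩).1.drop (wlist v).length,
    (image_cases_s v f _ (List.prefix_append _ _)).2⟩
  invFun d := ⟨(f.1.symm ⟨wlist v ++ d.1, graft_mem_right v d.2⟩).1.drop (eOf v f).1.length, by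
    apply sub_mem_drop (f.1.symm ⟨wlist v ++ d.1, graft_mem_right v d.2⟩).2
    rw [prefix_e_iff v f (f.1.symm ⟨wlist v ++ d.1, graft_mem_right v d.2⟩),
      f.1.apply_symm_apply]
    exact List.prefix_append _ _⟩
  left_inv b := by
    apply Subtype.ext
    show (f.1.symm ⟨wlist v ++ (f.1 ⟨(eOf v f).1 ++ b.1, _⟩).1.drop (wlist v).length, _⟩).1.drop
      (eOf v f).1.length = b.1
    have h1 : (⟨wlist v ++ (f.1 ⟨(eOf v f).1 ++ b.1, sub_mem b.2⟩).1.drop (wlist v).length,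
        graft_mem_right v (image_cases_s v f _ (List.prefix_append _ _)).2⟩ :
          Vx (graft v.1 r s)) = f.1 ⟨(eOf v f).1 ++ b.1, sub_mem b.2⟩ :=
      Subtype.ext (eq_append_drop_of_prefix
        (image_cases_s v f ⟨(eOf v f).1 ++ b.1, sub_mem b.2⟩ (List.prefix_append _ _)).1)
    rw [h1, f.1.symm_apply_apply]
    exact List.drop_left
  right_inv d := by
    apply Subtype.ext
    show (f.1 ⟨(eOf v f).1 ++ (f.1.symm ⟨wlist v ++ d.1, _⟩).1.drop (eOf v f).1.length, _⟩).1.drop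
      (wlist v).length = d.1
    have hpre : (eOf v f).1 <+: (f.1.symm ⟨wlist v ++ d.1, graft_mem_right v d.2⟩).1 := by
      rw [prefix_e_iff v f (f.1.symm ⟨wlist v ++ d.1, graft_mem_right v d.2⟩),
        f.1.apply_symm_apply]
      exact List.prefix_append _ _
    have h1 : (⟨(eOf v f).1 ++ (f.1.symm ⟨wlist v ++ d.1,
        graft_mem_right v d.2⟩).1.drop (eOf v f).1.length,
        sub_mem (sub_mem_drop (f.1.symm ⟨wlist v ++ d.1, graft_mem_right v d.2⟩).2 hpre)⟩ :
          Vx t) = f.1.symm ⟨wlist v ++ d.1, graft_mem_right v d.2⟩ :=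
      Subtype.ext (eq_append_drop_of_prefix hpre)
    rw [h1, f.1.apply_symm_apply]
    exact List.drop_left

theorem fwdHe_val (b : Vx (subtreeAt (eOf v f).1 t)) :
    (fwdHe v f b).1 = (f.1 ⟨(eOf v f).1 ++ b.1, sub_mem b.2⟩).1.drop (wlist v).length := rfl

noncomputable def fwdH : IsoM (subtreeAt (eOf v f).1 t) s := by
  refine ⟨fwdHe v f, ?_, ?_⟩
  · show (fwdHe v f ⟨[], root_mem_pos _⟩).1 = []
    rw [fwdHe_val]
    have hx : (⟨(eOf v f).1 ++ ([] : List ℕ), sub_mem (root_mem_pos _)⟩ : Vx t) = eOf v f :=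
      Subtype.ext (List.append_nil _)
    rw [hx, f_eOf]
    exact List.drop_length
  · intro b1 b2
    rw [fwdHe_val, fwdHe_val]
    have e1 := eq_append_drop_of_prefix
      (image_cases_s v f ⟨(eOf v f).1 ++ b1.1, sub_mem b1.2⟩ (List.prefix_append _ _)).1
    have e2 := eq_append_drop_of_prefix
      (image_cases_s v f ⟨(eOf v f).1 ++ b2.1, sub_mem b2.2⟩ (List.prefix_append _ _)).1
    calc adj b1.1 b2.1
        ↔ adj ((eOf v f).1 ++ b1.1) ((eOf v f).1 ++ b2.1) := adj_append.symm
      _ ↔ adj (f.1 ⟨(eOf v f).1 ++ b1.1, sub_mem b1.2⟩).1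
            (f.1 ⟨(eOf v f).1 ++ b2.1, sub_mem b2.2⟩).1 :=
          f.2.2 ⟨(eOf v f).1 ++ b1.1, sub_mem b1.2⟩ ⟨(eOf v f).1 ++ b2.1, sub_mem b2.2⟩
      _ ↔ adj (wlist v ++ (f.1 ⟨(eOf v f).1 ++ b1.1, sub_mem b1.2⟩).1.drop (wlist v).length)
            (wlist v ++ (f.1 ⟨(eOf v f).1 ++ b2.1, sub_mem b2.2⟩).1.drop (wlist v).length) := by
          rw [e1, e2]
      _ ↔ _ := adj_append

end Forward

end Main

/-! ### Part F: backward construction -/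

section Backward

variable {r s t : RTree}
variable (e : Vx t) (hne : e.1 ≠ []) (gg : IsoM (removeAt e.1 t) r)
  (hh : IsoM (subtreeAt e.1 t) s)

noncomputable def vOf : Vx r := gg.1 (piOf e hne)

noncomputable def bwdFfun (q : Vx t) : Vx (graft (vOf e hne gg).1 r s) :=
  if hq : e.1 <+: q.1 then
    ⟨wlist (vOf e hne gg) ++ (hh.1 ⟨q.1.drop e.1.length, sub_mem_drop q.2 hq⟩).1,
      graft_mem_right _ (hh.1 ⟨q.1.drop e.1.length, sub_mem_drop q.2 hq⟩).2⟩
  else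
    ⟨(gg.1 ⟨rho e.1 q.1, remove_mem hne q.2 hq⟩).1,
      graft_mem_left _ (gg.1 ⟨rho e.1 q.1, remove_mem hne q.2 hq⟩).2⟩

theorem bwdF_pos (q : Vx t) (hq : e.1 <+: q.1) :
    (bwdFfun e hne gg hh q).1 =
      wlist (vOf e hne gg) ++ (hh.1 ⟨q.1.drop e.1.length, sub_mem_drop q.2 hq⟩).1 := by
  rw [bwdFfun, dif_pos hq]

theorem bwdF_neg (q : Vx t) (hq : ¬ e.1 <+: q.1) :
    (bwdFfun e hne gg hh q).1 = (gg.1 ⟨rho e.1 q.1, remove_mem hne q.2 hq⟩).1 := by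
  rw [bwdFfun, dif_neg hq]

noncomputable def bwdFinv (x : Vx (graft (vOf e hne gg).1 r s)) : Vx t :=
  if hx : x.1 ∈ pos r then
    ⟨rhoInv e.1 (gg.1.symm ⟨x.1, hx⟩).1, remove_mem_inv hne (gg.1.symm ⟨x.1, hx⟩).2⟩
  else
    ⟨e.1 ++ (hh.1.symm ⟨x.1.drop (wlist (vOf e hne gg)).length,
        (graft_mem_cases x.2 hx).2⟩).1,
      sub_mem (hh.1.symm ⟨x.1.drop (wlist (vOf e hne gg)).length,
        (graft_mem_cases x.2 hx).2⟩).2⟩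

noncomputable def bwdFe : Vx t ≃ Vx (graft (vOf e hne gg).1 r s) where
  toFun := bwdFfun e hne gg hh
  invFun := bwdFinv e hne gg hh
  left_inv q := by
    apply Subtype.ext
    by_cases hq : e.1 <+: q.1
    · have hv := bwdF_pos e hne gg hh q hq
      have hnr : (bwdFfun e hne gg hh q).1 ∉ pos r := by
        rw [hv]; exact not_mem_wlist_append _ _
      rw [bwdFinv, dif_neg hnr]
      show e.1 ++ _ = q.1
      have hb : (⟨(bwdFfun e hne gg hh q).1.drop (wlist (vOf e hne gg)).length,
          (graft_mem_cases (bwdFfun e hne gg hh q).2 hnr).2⟩ : Vx s) =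
          hh.1 ⟨q.1.drop e.1.length, sub_mem_drop q.2 hq⟩ :=
        Subtype.ext (show (bwdFfun e hne gg hh q).1.drop (wlist (vOf e hne gg)).length = _ by
          rw [hv]; exact List.drop_left)
      rw [hb, hh.1.symm_apply_apply]
      exact eq_append_drop_of_prefix hq
    · have hv := bwdF_neg e hne gg hh q hq
      have hr : (bwdFfun e hne gg hh q).1 ∈ pos r := by
        rw [hv]; exact (gg.1 _).2
      rw [bwdFinv, dif_pos hr]
      show rhoInv e.1 _ = q.1
      have hx : (⟨(bwdFfun e hne gg hh q).1, hr⟩ : Vx r) =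
          gg.1 ⟨rho e.1 q.1, remove_mem hne q.2 hq⟩ := Subtype.ext hv
      rw [hx, gg.1.symm_apply_apply]
      exact rhoInv_rho hq
  right_inv x := by
    apply Subtype.ext
    by_cases hx : x.1 ∈ pos r
    · rw [bwdFinv, dif_pos hx]
      have hq : ¬ e.1 <+: rhoInv e.1 (gg.1.symm ⟨x.1, hx⟩).1 :=
        not_prefix_rhoInv hne _
      rw [bwdF_neg e hne gg hh _ hq]
      show (gg.1 ⟨rho e.1 (rhoInv e.1 _), _⟩).1 = x.1
      have ha : (⟨rho e.1 (rhoInv e.1 (gg.1.symm ⟨x.1, hx⟩).1),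
          remove_mem hne (remove_mem_inv hne (gg.1.symm ⟨x.1, hx⟩).2) hq⟩ :
            Vx (removeAt e.1 t)) = gg.1.symm ⟨x.1, hx⟩ :=
        Subtype.ext (rho_rhoInv hne _)
      rw [ha, gg.1.apply_symm_apply]
    · rw [bwdFinv, dif_neg hx]
      have hq : e.1 <+: e.1 ++ (hh.1.symm ⟨x.1.drop (wlist (vOf e hne gg)).length,
          (graft_mem_cases x.2 hx).2⟩).1 := List.prefix_append _ _
      rw [bwdF_pos e hne gg hh _ hq]
      show wlist (vOf e hne gg) ++ _ = x.1
      have hb : (⟨(e.1 ++ (hh.1.symm ⟨x.1.drop (wlist (vOf e hne gg)).length,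
          (graft_mem_cases x.2 hx).2⟩).1).drop e.1.length,
          sub_mem_drop (sub_mem (hh.1.symm ⟨x.1.drop (wlist (vOf e hne gg)).length,
            (graft_mem_cases x.2 hx).2⟩).2) hq⟩ : Vx (subtreeAt e.1 t)) =
          hh.1.symm ⟨x.1.drop (wlist (vOf e hne gg)).length, (graft_mem_cases x.2 hx).2⟩ :=
        Subtype.ext (List.drop_left)
      rw [hb, hh.1.apply_symm_apply]
      exact eq_append_drop_of_prefix (graft_mem_cases x.2 hx).1

theorem bwd_not_wlist_prefix (q : Vx t) (hq : ¬ e.1 <+: q.1) :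
    ¬ wlist (vOf e hne gg) <+: (gg.1 ⟨rho e.1 q.1, remove_mem hne q.2 hq⟩).1 := by
  intro hp
  have hm := (gg.1 ⟨rho e.1 q.1, remove_mem hne q.2 hq⟩).2
  rw [← eq_append_drop_of_prefix hp] at hm
  exact not_mem_wlist_append _ _ hm

theorem bwd_adj_mixed (q1 q2 : Vx t) (hq1 : ¬ e.1 <+: q1.1) (hq2 : e.1 <+: q2.1) :
    adj q1.1 q2.1 ↔ adj (bwdFfun e hne gg hh q1).1 (bwdFfun e hne gg hh q2).1 := by
  set b2 : Vx (subtreeAt e.1 t) := ⟨q2.1.drop e.1.length, sub_mem_drop q2.2 hq2⟩ with hb2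
  set a1 : Vx (removeAt e.1 t) := ⟨rho e.1 q1.1, remove_mem hne q1.2 hq1⟩ with ha1
  have lhs : adj q1.1 q2.1 ↔ (q1.1 = e.1.dropLast ∧ b2.1 = []) := by
    conv_lhs => rw [← eq_append_drop_of_prefix hq2]
    exact adj_cross hne hq1
  have rhs : adj (bwdFfun e hne gg hh q1).1 (bwdFfun e hne gg hh q2).1 ↔
      ((gg.1 a1).1 = (wlist (vOf e hne gg)).dropLast ∧ (hh.1 b2).1 = []) := by
    rw [bwdF_pos e hne gg hh q2 hq2, bwdF_neg e hne gg hh q1 hq1]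
    exact adj_cross (wlist_ne _) (bwd_not_wlist_prefix e hne gg q1 hq1)
  rw [lhs, rhs, wlist_dropLast]
  constructor
  · rintro ⟨h1, h2⟩
    constructor
    · show (gg.1 a1).1 = (gg.1 (piOf e hne)).1
      congr 2
      apply Subtype.ext
      show rho e.1 q1.1 = e.1.dropLast
      rw [h1, rho_parent]
    · have : b2 = ⟨[], root_mem_pos _⟩ := Subtype.ext h2
      rw [this, hh.2.1]
  · rintro ⟨h1, h2⟩
    refine ⟨?_, ?_⟩
    · have ha : a1 = piOf e hne := gg.1.injective (Subtype.ext h1)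
      have hv : rho e.1 q1.1 = e.1.dropLast := congrArg Subtype.val ha
      have hfin := congrArg (rhoInv e.1) hv
      rwa [rhoInv_rho hq1, rhoInv_parent] at hfin
    · have hbv : hh.1 b2 = hh.1 ⟨[], root_mem_pos _⟩ := by
        apply Subtype.ext
        rw [h2, hh.2.1]
      exact congrArg Subtype.val (hh.1.injective hbv)

noncomputable def bwdF : IsoM t (graft (vOf e hne gg).1 r s) := by
  refine ⟨bwdFe e hne gg hh, ?_, ?_⟩
  · show (bwdFfun e hne gg hh ⟨[], root_mem_pos t⟩).1 = []
    have hq : ¬ e.1 <+: ([] : List ℕ) := by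
      rw [List.prefix_nil]
      exact hne
    rw [bwdF_neg e hne gg hh _ hq]
    have ha : (⟨rho e.1 [], remove_mem hne (root_mem_pos t) hq⟩ : Vx (removeAt e.1 t)) =
        ⟨[], root_mem_pos _⟩ := Subtype.ext (rho_nil_right _)
    rw [ha, gg.2.1]
  · intro q1 q2
    show adj q1.1 q2.1 ↔ adj (bwdFfun e hne gg hh q1).1 (bwdFfun e hne gg hh q2).1
    by_cases hq1 : e.1 <+: q1.1 <;> by_cases hq2 : e.1 <+: q2.1
    · calc adj q1.1 q2.1
          ↔ adj (e.1 ++ q1.1.drop e.1.length) (e.1 ++ q2.1.drop e.1.length) := by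
            rw [eq_append_drop_of_prefix hq1, eq_append_drop_of_prefix hq2]
        _ ↔ adj (q1.1.drop e.1.length) (q2.1.drop e.1.length) := adj_append
        _ ↔ adj (hh.1 ⟨q1.1.drop e.1.length, sub_mem_drop q1.2 hq1⟩).1
              (hh.1 ⟨q2.1.drop e.1.length, sub_mem_drop q2.2 hq2⟩).1 :=
            hh.2.2 ⟨q1.1.drop e.1.length, sub_mem_drop q1.2 hq1⟩
              ⟨q2.1.drop e.1.length, sub_mem_drop q2.2 hq2⟩
        _ ↔ adj (wlist (vOf e hne gg) ++ (hh.1 ⟨q1.1.drop e.1.length, sub_mem_drop q1.2 hq1⟩).1)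
              (wlist (vOf e hne gg) ++ (hh.1 ⟨q2.1.drop e.1.length, sub_mem_drop q2.2 hq2⟩).1) :=
            adj_append.symm
        _ ↔ _ := by rw [bwdF_pos e hne gg hh q1 hq1, bwdF_pos e hne gg hh q2 hq2]
    · rw [adj_comm, adj_comm (p := (bwdFfun e hne gg hh q1).1)]
      exact bwd_adj_mixed e hne gg hh q2 q1 hq2 hq1
    · exact bwd_adj_mixed e hne gg hh q1 q2 hq1 hq2
    · calc adj q1.1 q2.1
          ↔ adj (rho e.1 q1.1) (rho e.1 q2.1) := rho_adj hne hq1 hq2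
        _ ↔ adj (gg.1 ⟨rho e.1 q1.1, remove_mem hne q1.2 hq1⟩).1
              (gg.1 ⟨rho e.1 q2.1, remove_mem hne q2.2 hq2⟩).1 :=
            gg.2.2 ⟨rho e.1 q1.1, remove_mem hne q1.2 hq1⟩
              ⟨rho e.1 q2.1, remove_mem hne q2.2 hq2⟩
        _ ↔ _ := by rw [bwdF_neg e hne gg hh q1 hq1, bwdF_neg e hne gg hh q2 hq2]

end Backward

/-! ### Part G: the two counting sets and injections between them -/

def XT (r s t : RTree) : Type := Σ v : Vx r, IsoM t (graft v.1 r s)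

def YT (r s t : RTree) : Type :=
  Σ e : Vx t, PLift (e.1 ≠ []) × IsoM (removeAt e.1 t) r × IsoM (subtreeAt e.1 t) s

noncomputable instance (r s t : RTree) : Finite (XT r s t) := by
  unfold XT; infer_instance

noncomputable instance (r s t : RTree) : Finite (YT r s t) := by
  unfold YT; infer_instance

noncomputable def fwd {r s t : RTree} : XT r s t → YT r s t := fun x =>
  ⟨eOf x.1 x.2, ⟨eOf_ne x.1 x.2⟩, fwdG x.1 x.2, fwdH x.1 x.2⟩

noncomputable def bwd {r s t : RTree} : YT r s t → XT r s t := fun y =>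
  ⟨vOf y.1 y.2.1.down y.2.2.1, bwdF y.1 y.2.1.down y.2.2.1 y.2.2.2⟩

noncomputable def fval {a b : RTree} (f : Vx a ≃ Vx b) (q : List ℕ) : List ℕ :=
  if h : q ∈ pos a then (f ⟨q, h⟩).1 else []

theorem fval_eq {a b : RTree} (f : Vx a ≃ Vx b) (q : List ℕ) (h : q ∈ pos a) :
    fval f q = (f ⟨q, h⟩).1 := dif_pos h

noncomputable def yval {r s t : RTree} (y : YT r s t) :
    List ℕ × (List ℕ → List ℕ) × (List ℕ → List ℕ) :=
  (y.1.1, fval y.2.2.1.1, fval y.2.2.2.1)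

noncomputable def xval {r s t : RTree} (x : XT r s t) : List ℕ × (List ℕ → List ℕ) :=
  (x.1.1, fval x.2.1)

/-- The value of the `g`-component of `fwd` reproduces the values of `f`. -/
theorem fwdG_val {r s t : RTree} (v : Vx r) (f : IsoM t (graft v.1 r s))
    {q : List ℕ} (hq : q ∈ pos t) (hpre : ¬ (eOf v f).1 <+: q) :
    fval (fwdG v f).1 (rho (eOf v f).1 q) = (f.1 ⟨q, hq⟩).1 := by
  rw [fval_eq _ _ (remove_mem (eOf_ne v f) hq hpre)]
  show (fwdGe v f _).1 = _
  rw [fwdGe_val]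
  congr 2
  exact Subtype.ext (rhoInv_rho hpre)

theorem fwdH_val {r s t : RTree} (v : Vx r) (f : IsoM t (graft v.1 r s))
    {q : List ℕ} (hq : q ∈ pos t) (hpre : (eOf v f).1 <+: q) :
    fval (fwdH v f).1 (q.drop (eOf v f).1.length) =
      (f.1 ⟨q, hq⟩).1.drop (wlist v).length := by
  rw [fval_eq _ _ (sub_mem_drop hq hpre)]
  show (fwdHe v f _).1 = _
  rw [fwdHe_val]
  congr 3
  exact Subtype.ext (eq_append_drop_of_prefix hpre)

theorem fwdG_val_pi {r s t : RTree} (v : Vx r) (f : IsoM t (graft v.1 r s)) :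
    fval (fwdG v f).1 (eOf v f).1.dropLast = v.1 := by
  have hmem : (eOf v f).1.dropLast ∈ pos (removeAt (eOf v f).1 t) :=
    (piOf (eOf v f) (eOf_ne v f)).2
  rw [fval_eq _ _ hmem]
  show (fwdGe v f _).1 = _
  rw [fwdGe_val]
  have h1 : (⟨rhoInv (eOf v f).1 (eOf v f).1.dropLast, remove_mem_inv (eOf_ne v f) hmem⟩ :
      Vx t) = ⟨(eOf v f).1.dropLast, mem_pos.2 (isPath_dropLast (mem_pos.1 (eOf v f).2))⟩ :=
    Subtype.ext (rhoInv_parent _)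
  rw [h1]
  have h2 := f.parent_eq (eOf v f) (eOf_ne v f)
  rw [h2, f_eOf]
  exact wlist_dropLast v

theorem fwd_injective {r s t : RTree} : Function.Injective (fwd (r := r) (s := s) (t := t)) := by
  rintro ⟨v1, f1⟩ ⟨v2, f2⟩ hxy
  have hY := congrArg yval hxy
  have he : (eOf v1 f1).1 = (eOf v2 f2).1 := congrArg Prod.fst hY
  have hgv : fval (fwdG v1 f1).1 = fval (fwdG v2 f2).1 := congrArg (fun z => z.2.1) hY
  have hhv : fval (fwdH v1 f1).1 = fval (fwdH v2 f2).1 := congrArg (fun z => z.2.2) hY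
  -- v1 = v2
  have hv12 : v1 = v2 := by
    apply Subtype.ext
    rw [← fwdG_val_pi v1 f1, ← fwdG_val_pi v2 f2, hgv, he]
  subst hv12
  -- f1 = f2
  have hval : ∀ q : Vx t, (f1.1 q).1 = (f2.1 q).1 := by
    intro q
    by_cases hpre : (eOf v1 f1).1 <+: q.1
    · have hpre2 : (eOf v1 f2).1 <+: q.1 := by rw [← he]; exact hpre
      have d1 := fwdH_val v1 f1 q.2 hpre
      have d2 := fwdH_val v1 f2 q.2 hpre2
      rw [Subtype.coe_eta] at d1 d2
      have hdrop : (f1.1 q).1.drop (wlist v1).length = (f2.1 q).1.drop (wlist v1).length := by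
        rw [← d1, ← d2, hhv, he]
      have w1 := (image_cases_s v1 f1 q hpre).1
      have w2 := (image_cases_s v1 f2 q hpre2).1
      rw [← eq_append_drop_of_prefix w1, ← eq_append_drop_of_prefix w2, hdrop]
    · have hpre2 : ¬ (eOf v1 f2).1 <+: q.1 := by rw [← he]; exact hpre
      have d1 := fwdG_val v1 f1 q.2 hpre
      have d2 := fwdG_val v1 f2 q.2 hpre2
      rw [Subtype.coe_eta] at d1 d2
      rw [← d1, ← d2, hgv, he]
  have hf : f1 = f2 := by
    apply Subtype.ext
    apply Equiv.ext
    intro q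
    exact Subtype.ext (hval q)
  rw [hf]

theorem bwdF_val_e {r s t : RTree} (e : Vx t) (hne : e.1 ≠ [])
    (gg : IsoM (removeAt e.1 t) r) (hh : IsoM (subtreeAt e.1 t) s) :
    fval (bwdF e hne gg hh).1 e.1 = wlist (vOf e hne gg) := by
  rw [fval_eq _ _ e.2]
  show (bwdFfun e hne gg hh _).1 = _
  rw [bwdF_pos e hne gg hh ⟨e.1, e.2⟩ (by exact List.prefix_refl _)]
  have h1 : (⟨(e.1 : List ℕ).drop e.1.length, sub_mem_drop e.2 (List.prefix_refl _)⟩ :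
      Vx (subtreeAt e.1 t)) = ⟨[], root_mem_pos _⟩ := Subtype.ext (List.drop_length)
  rw [h1, hh.2.1, List.append_nil]

theorem bwdF_val_g {r s t : RTree} (e : Vx t) (hne : e.1 ≠ [])
    (gg : IsoM (removeAt e.1 t) r) (hh : IsoM (subtreeAt e.1 t) s)
    (a : Vx (removeAt e.1 t)) :
    fval (bwdF e hne gg hh).1 (rhoInv e.1 a.1) = (gg.1 a).1 := by
  rw [fval_eq _ _ (remove_mem_inv hne a.2)]
  show (bwdFfun e hne gg hh _).1 = _
  rw [bwdF_neg e hne gg hh _ (not_prefix_rhoInv hne _)]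
  congr 2
  apply Subtype.ext
  show rho e.1 (rhoInv e.1 a.1) = a.1
  exact rho_rhoInv hne _

theorem bwdF_val_h {r s t : RTree} (e : Vx t) (hne : e.1 ≠ [])
    (gg : IsoM (removeAt e.1 t) r) (hh : IsoM (subtreeAt e.1 t) s)
    (b : Vx (subtreeAt e.1 t)) :
    fval (bwdF e hne gg hh).1 (e.1 ++ b.1) =
      wlist (vOf e hne gg) ++ (hh.1 b).1 := by
  rw [fval_eq _ _ (sub_mem b.2)]
  show (bwdFfun e hne gg hh _).1 = _
  rw [bwdF_pos e hne gg hh _ (List.prefix_append _ _)]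
  congr 3
  apply Subtype.ext
  show (e.1 ++ b.1).drop e.1.length = b.1
  exact List.drop_left

theorem bwd_injective {r s t : RTree} : Function.Injective (bwd (r := r) (s := s) (t := t)) := by
  rintro ⟨e1, ⟨ne1⟩, g1, h1⟩ ⟨e2, ⟨ne2⟩, g2, h2⟩ hxy
  have hX := congrArg xval hxy
  have hv : (vOf e1 ne1 g1).1 = (vOf e2 ne2 g2).1 := congrArg Prod.fst hX
  have hvv : vOf e1 ne1 g1 = vOf e2 ne2 g2 := Subtype.ext hv
  have hfv : fval (bwdF e1 ne1 g1 h1).1 = fval (bwdF e2 ne2 g2 h2).1 :=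
    congrArg Prod.snd hX
  -- e1 = e2
  have he12 : e1 = e2 := by
    apply Subtype.ext
    have k1 := bwdF_val_e e1 ne1 g1 h1
    have k2 := bwdF_val_e e2 ne2 g2 h2
    rw [hfv] at k1
    rw [fval_eq _ _ e1.2] at k1
    rw [fval_eq _ _ e2.2] at k2
    have : (bwdF e2 ne2 g2 h2).1 ⟨e1.1, e1.2⟩ = (bwdF e2 ne2 g2 h2).1 ⟨e2.1, e2.2⟩ := by
      apply Subtype.ext
      rw [k1, k2, hvv]
    have := (bwdF e2 ne2 g2 h2).1.injective this
    exact congrArg Subtype.val this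
  subst he12
  have hg : g1 = g2 := by
    apply Subtype.ext
    apply Equiv.ext
    intro a
    apply Subtype.ext
    have k1 := bwdF_val_g e1 ne1 g1 h1 a
    have k2 := bwdF_val_g e1 ne2 g2 h2 a
    rw [hfv] at k1
    rw [← k1, ← k2]
  have hhl : h1 = h2 := by
    apply Subtype.ext
    apply Equiv.ext
    intro b
    apply Subtype.ext
    have k1 := bwdF_val_h e1 ne1 g1 h1 b
    have k2 := bwdF_val_h e1 ne2 g2 h2 b
    rw [hfv] at k1
    rw [k2] at k1
    have hlen : (wlist (vOf e1 ne1 g1)).length = (wlist (vOf e1 ne2 g2)).length := by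
      rw [hvv]
    have := congrArg (fun z => z.drop (wlist (vOf e1 ne2 g2)).length) k1
    simpa [List.drop_left', hlen.symm] using this.symm
  subst hg
  subst hhl
  rfl

/-! ### Part H: counting -/

theorem decide_irrel {p : Prop} (i1 i2 : Decidable p) : @decide p i1 = @decide p i2 := by
  cases Subsingleton.elim i1 i2; rfl

theorem nat_card_plift_pos {p : Prop} (hp : p) : Nat.card (PLift p) = 1 := by
  apply Nat.card_eq_one_iff_unique.2
  exact ⟨⟨fun ⟨a⟩ ⟨b⟩ => rfl⟩, ⟨⟨hp⟩⟩⟩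

theorem nat_card_plift_neg {p : Prop} (hp : ¬ p) : Nat.card (PLift p) = 0 :=
  Nat.card_eq_zero.2 (Or.inl ⟨fun x => hp x.down⟩)

theorem nat_card_sigma_filter {α : Type} [DecidableEq α] (l : List α) (hl : l.Nodup)
    (F : {x // x ∈ l} → Type) [∀ i, Finite (F i)]
    (P : α → Prop) [DecidablePred P] (c : ℕ)
    (hc : ∀ i : {x // x ∈ l}, Nat.card (F i) = if P i.1 then c else 0) :
    Nat.card (Σ i, F i) = (l.filter (fun a => decide (P a))).length * c := by
  haveI : ∀ i, Fintype (F i) := fun i => Fintype.ofFinite _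
  rw [Nat.card_eq_fintype_card, Fintype.card_sigma]
  have step1 : ∀ i : {x // x ∈ l}, Fintype.card (F i) = if P i.1 then c else 0 := by
    intro i
    rw [← Nat.card_eq_fintype_card]
    exact hc i
  calc ∑ i : {x // x ∈ l}, Fintype.card (F i)
      = ∑ i : {x // x ∈ l}, (if P i.1 then c else 0) :=
        Finset.sum_congr rfl (fun i _ => step1 i)
    _ = ∑ a ∈ l.toFinset, (if P a then c else 0) :=
        (Finset.sum_subtype (p := (· ∈ l)) l.toFinset (fun x => List.mem_toFinset)
          (fun a => if P a then c else 0)).symm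
    _ = ∑ _a ∈ l.toFinset.filter P, c := (Finset.sum_filter _ _).symm
    _ = (l.toFinset.filter P).card * c := by rw [Finset.sum_const, smul_eq_mul]
    _ = (l.filter (fun a => decide (P a))).length * c := by
        congr 1
        have h1 : l.toFinset.filter P = (l.filter (fun a => decide (P a))).toFinset := by
          rw [List.toFinset_filter]
          apply Finset.filter_congr
          intro x _
          simp
        rw [h1, List.toFinset_card_of_nodup (hl.filter _)]

theorem card_XT_eq (r s t : RTree) : Nat.card (XT r s t) = beta t s r * xi t := by
  classical
  have hc : ∀ v : {x // x ∈ pos r}, Nat.card (IsoM t (graft v.1 r s)) =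
      if Iso t (graft v.1 r s) then xi t else 0 := by
    intro v
    by_cases hi : Iso t (graft v.1 r s)
    · rw [if_pos hi]
      obtain ⟨gw⟩ := iso_iff_nonempty.1 hi
      exact card_isoM_left gw
    · rw [if_neg hi]
      exact card_isoM_of_empty (fun hne => hi (iso_iff_nonempty.2 hne))
  have key := nat_card_sigma_filter (pos r) (pos_nodup r)
    (fun v => IsoM t (graft v.1 r s)) (fun a => Iso t (graft a r s)) (xi t) hc
  have hbeta : beta t s r = ((pos r).filter fun a => decide (Iso t (graft a r s))).length := rfl
  rw [hbeta, ← key]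
  rfl

theorem card_YT_eq (r s t : RTree) : Nat.card (YT r s t) = alpha s t r * (xi r * xi s) := by
  classical
  have hc : ∀ e : {x // x ∈ pos t},
      Nat.card (PLift (e.1 ≠ []) × IsoM (removeAt e.1 t) r × IsoM (subtreeAt e.1 t) s) =
      if (e.1 ≠ [] ∧ Iso (subtreeAt e.1 t) s ∧ Iso (removeAt e.1 t) r)
        then xi r * xi s else 0 := by
    intro e
    rw [Nat.card_prod, Nat.card_prod]
    by_cases h1 : e.1 ≠ []
    · by_cases h2 : Iso (subtreeAt e.1 t) s
      · by_cases h3 : Iso (removeAt e.1 t) r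
        · rw [if_pos ⟨h1, h2, h3⟩, nat_card_plift_pos h1]
          obtain ⟨gw⟩ := iso_iff_nonempty.1 h3
          obtain ⟨hw⟩ := iso_iff_nonempty.1 h2
          rw [card_isoM_right gw, card_isoM_right hw, one_mul]
        · rw [if_neg (by tauto), card_isoM_of_empty (fun hne => h3 (iso_iff_nonempty.2 hne))]
          ring
      · rw [if_neg (by tauto), card_isoM_of_empty (fun hne => h2 (iso_iff_nonempty.2 hne))]
        ring
    · rw [if_neg (by tauto), nat_card_plift_neg h1]
      ring
  have key := nat_card_sigma_filter (pos t) (pos_nodup t)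
    (fun e => PLift (e.1 ≠ []) × IsoM (removeAt e.1 t) r × IsoM (subtreeAt e.1 t) s)
    (fun a => a ≠ [] ∧ Iso (subtreeAt a t) s ∧ Iso (removeAt a t) r) (xi r * xi s) hc
  have halpha : alpha s t r = ((pos t).filter fun a =>
      decide (a ≠ [] ∧ Iso (subtreeAt a t) s ∧ Iso (removeAt a t) r)).length := rfl
  rw [halpha, ← key]
  rfl

/-- For rooted trees `r, s, t`, one has `β(t,s,r) ξ_t = α(s,t,r) ξ_r ξ_s`, where `ξ_u`
is the number of root-fixing graph automorphisms of `u`. -/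
theorem beta_mul_xi_eq_alpha_mul_xi_mul_xi (r s t : RTree) :
    beta t s r * xi t = alpha s t r * (xi r * xi s) := by
  calc beta t s r * xi t = Nat.card (XT r s t) := (card_XT_eq r s t).symm
    _ = Nat.card (YT r s t) :=
        le_antisymm (Nat.card_le_card_of_injective _ fwd_injective)
          (Nat.card_le_card_of_injective _ bwd_injective)
    _ = alpha s t r * (xi r * xi s) := card_YT_eq r s t

end RTree

end IE
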